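/- arXiv:2005.13239 — 2 statements merged into one kernel-verified Lean document; each statement's English description precedes it below -/
import Mathlib

section
/- Let u : S×A → ℝ≥0 be an admissible error estimator, i.e., suppose γ·|G^π(s,a)| ≤ λ·u(s,a) for all (s,a). Define the penalized reward r̃(s,a) = r(s,a) − λ·u(s,a) and the penalized MDP M̃ = (S,A,T̂,r̃,μ₀,γ). Then η_M(π) ≥ η_{M̃}(π), i.e., the return of π in the true MDP is bounded below by its return in the uncertainty-penalized model MDP. -/
open scoped BigOperators
open Filter Topology Classical

section MDP

variable {S A : Type*} [Fintype S] [Fintype A]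

/-- π is a valid stochastic policy. -/
def IsPolicy (π : S → A → ℝ) : Prop :=
  (∀ s a, 0 ≤ π s a) ∧ ∀ s, ∑ a, π s a = 1

/-- T is a valid transition kernel. -/
def IsKernel (T : S → A → S → ℝ) : Prop :=
  (∀ s a s', 0 ≤ T s a s') ∧ ∀ s a, ∑ s', T s a s' = 1

/-- μ is a probability distribution on states. -/
def IsDist (μ : S → ℝ) : Prop :=
  (∀ s, 0 ≤ μ s) ∧ ∑ s, μ s = 1

/-- Distribution of the state at time t under policy π and dynamics T, from μ0. -/
def stateDist (T : S → A → S → ℝ) (π : S → A → ℝ) (μ0 : S → ℝ) : ℕ → S → ℝ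
  | 0 => μ0
  | t + 1 => fun s' => ∑ s, ∑ a, stateDist T π μ0 t s * π s a * T s a s'

/-- Unnormalized discounted occupancy measure ρ^π_T(s,a). -/
noncomputable def occupancy (γ : ℝ) (T : S → A → S → ℝ) (π : S → A → ℝ)
    (μ0 : S → ℝ) (s : S) (a : A) : ℝ :=
  π s a * ∑' t : ℕ, γ ^ t * stateDist T π μ0 t s

/-- Improper expectation Ē of f with respect to the occupancy measure. -/
noncomputable def expOcc (γ : ℝ) (T : S → A → S → ℝ) (π : S → A → ℝ)
    (μ0 : S → ℝ) (f : S → A → ℝ) : ℝ :=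
  ∑ s, ∑ a, occupancy γ T π μ0 s a * f s a

/-- Expected discounted return η_M(π). -/
noncomputable def ret (γ : ℝ) (T : S → A → S → ℝ) (π : S → A → ℝ)
    (μ0 : S → ℝ) (r : S → A → ℝ) : ℝ :=
  ∑' t : ℕ, γ ^ t * ∑ s, ∑ a, stateDist T π μ0 t s * π s a * r s a

/-- Value function V_M^π(s): return starting from the Dirac distribution at s. -/
noncomputable def value (γ : ℝ) (T : S → A → S → ℝ) (π : S → A → ℝ)
    (r : S → A → ℝ) (s0 : S) : ℝ :=
  ret γ T π (fun s => if s = s0 then 1 else 0) r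

/-- G^π(s,a) = E_{s'∼T̂(s,a)}[V_M^π(s')] − E_{s'∼T(s,a)}[V_M^π(s')]. -/
noncomputable def Gpi (γ : ℝ) (T Th : S → A → S → ℝ) (π : S → A → ℝ)
    (r : S → A → ℝ) (s : S) (a : A) : ℝ :=
  (∑ s', Th s a s' * value γ T π r s') - ∑ s', T s a s' * value γ T π r s'

/-- Total variation distance between two distributions on a finite set. -/
noncomputable def tvDist (P Q : S → ℝ) : ℝ :=
  ⨆ E : Finset S, |(∑ s ∈ E, P s) - ∑ s ∈ E, Q s|

/-- Integral probability metric induced by a function class F. -/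
noncomputable def ipm (F : Set (S → ℝ)) (P Q : S → ℝ) : ℝ :=
  sSup {x : ℝ | ∃ f ∈ F, x = |(∑ s, P s * f s) - ∑ s, Q s * f s|}




lemma summable_geom_aux {γ : ℝ} (hγ0 : 0 ≤ γ) (hγ1 : γ < 1) (f : ℕ → ℝ) (C : ℝ)
    (hf : ∀ t, |f t| ≤ C) : Summable (fun t => γ ^ t * f t) := by
  apply Summable.of_abs
  refine Summable.of_nonneg_of_le (fun t => abs_nonneg _) (fun t => ?_)
    ((summable_geometric_of_lt_one hγ0 hγ1).mul_left C)
  rw [abs_mul, abs_pow, abs_of_nonneg hγ0]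
  calc γ ^ t * |f t| ≤ γ ^ t * C :=
        mul_le_mul_of_nonneg_left (hf t) (pow_nonneg hγ0 t)
    _ = C * γ ^ t := mul_comm _ _

lemma stateDist_nonneg {T : S → A → S → ℝ} {π : S → A → ℝ} {μ0 : S → ℝ}
    (hT : IsKernel T) (hπ : IsPolicy π) (hμ : ∀ s, 0 ≤ μ0 s) :
    ∀ t s, 0 ≤ stateDist T π μ0 t s := by
  intro t
  induction t with
  | zero => exact hμ
  | succ t ih =>
      intro s'
      simp only [stateDist]
      exact Finset.sum_nonneg fun s _ => Finset.sum_nonneg fun a _ =>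
        mul_nonneg (mul_nonneg (ih s) (hπ.1 s a)) (hT.1 s a s')

lemma stateDist_sum_one {T : S → A → S → ℝ} {π : S → A → ℝ} {μ0 : S → ℝ}
    (hT : IsKernel T) (hπ : IsPolicy π) (hμ : ∑ s, μ0 s = 1) :
    ∀ t, ∑ s, stateDist T π μ0 t s = 1 := by
  intro t
  induction t with
  | zero => exact hμ
  | succ t ih =>
      simp only [stateDist]
      rw [Finset.sum_comm]
      calc ∑ s, ∑ s', ∑ a, stateDist T π μ0 t s * π s a * T s a s'
          = ∑ s, ∑ a, ∑ s', stateDist T π μ0 t s * π s a * T s a s' :=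
            Finset.sum_congr rfl fun s _ => Finset.sum_comm
        _ = ∑ s, ∑ a, stateDist T π μ0 t s * π s a := by
            refine Finset.sum_congr rfl fun s _ => Finset.sum_congr rfl fun a _ => ?_
            rw [← Finset.mul_sum, hT.2 s a, mul_one]
        _ = ∑ s, stateDist T π μ0 t s := by
            refine Finset.sum_congr rfl fun s _ => ?_
            rw [← Finset.mul_sum, hπ.2 s, mul_one]
        _ = 1 := ih

lemma stateDist_le_one {T : S → A → S → ℝ} {π : S → A → ℝ} {μ0 : S → ℝ}
    (hT : IsKernel T) (hπ : IsPolicy π) (hμ : IsDist μ0) (t : ℕ) (s : S) :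
    stateDist T π μ0 t s ≤ 1 := by
  rw [← stateDist_sum_one hT hπ hμ.2 t]
  exact Finset.single_le_sum
    (fun s' _ => stateDist_nonneg hT hπ hμ.1 t s') (Finset.mem_univ s)


lemma reward_abs_bound {T : S → A → S → ℝ} {π : S → A → ℝ} {μ0 : S → ℝ}
    (hT : IsKernel T) (hπ : IsPolicy π) (hμ : IsDist μ0) (r : S → A → ℝ) (t : ℕ) :
    |∑ s, ∑ a, stateDist T π μ0 t s * π s a * r s a| ≤ ∑ s, ∑ a, |r s a| := by
  calc |∑ s, ∑ a, stateDist T π μ0 t s * π s a * r s a|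
      ≤ ∑ s, |∑ a, stateDist T π μ0 t s * π s a * r s a| :=
        Finset.abs_sum_le_sum_abs _ _
    _ ≤ ∑ s, ∑ a, |stateDist T π μ0 t s * π s a * r s a| :=
        Finset.sum_le_sum fun s _ => Finset.abs_sum_le_sum_abs _ _
    _ ≤ ∑ s, ∑ a, |r s a| := by
        refine Finset.sum_le_sum fun s _ => Finset.sum_le_sum fun a _ => ?_
        rw [abs_mul, abs_mul]
        have h1 : |stateDist T π μ0 t s| ≤ 1 := by
          rw [abs_of_nonneg (stateDist_nonneg hT hπ hμ.1 t s)]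
          exact stateDist_le_one hT hπ hμ t s
        have h2 : |π s a| ≤ 1 := by
          rw [abs_of_nonneg (hπ.1 s a)]
          rw [← hπ.2 s]
          exact Finset.single_le_sum (fun a' _ => hπ.1 s a') (Finset.mem_univ a)
        have h3 : |stateDist T π μ0 t s| * |π s a| ≤ 1 :=
          mul_le_one₀ h1 (abs_nonneg _) h2
        calc |stateDist T π μ0 t s| * |π s a| * |r s a|
            ≤ 1 * |r s a| := mul_le_mul_of_nonneg_right h3 (abs_nonneg _)
          _ = |r s a| := one_mul _

lemma dirac_isDist (s0 : S) : IsDist (fun s : S => if s = s0 then 1 else 0) := by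
  constructor
  · intro s; by_cases h : s = s0 <;> simp [h]
  · simp

lemma summable_ret {γ : ℝ} (hγ0 : 0 ≤ γ) (hγ1 : γ < 1)
    {T : S → A → S → ℝ} {π : S → A → ℝ} {μ0 : S → ℝ}
    (hT : IsKernel T) (hπ : IsPolicy π) (hμ : IsDist μ0) (r : S → A → ℝ) :
    Summable (fun t => γ ^ t * ∑ s, ∑ a, stateDist T π μ0 t s * π s a * r s a) :=
  summable_geom_aux hγ0 hγ1 _ (∑ s, ∑ a, |r s a|)
    (fun t => reward_abs_bound hT hπ hμ r t)

lemma stateDist_linear {T : S → A → S → ℝ} {π : S → A → ℝ} (μ0 : S → ℝ) (t : ℕ) :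
    ∀ s, stateDist T π μ0 t s
      = ∑ s0, μ0 s0 * stateDist T π (fun s => if s = s0 then 1 else 0) t s := by
  induction t with
  | zero =>
      intro s
      simp [stateDist]
  | succ t ih =>
      intro s'
      simp only [stateDist]
      simp only [fun s => ih s, Finset.sum_mul, Finset.mul_sum]
      conv_rhs => rw [Finset.sum_comm]
      refine Finset.sum_congr rfl fun s _ => ?_
      rw [Finset.sum_comm]
      exact Finset.sum_congr rfl fun s0 _ => Finset.sum_congr rfl fun a _ => by ring

lemma ret_linear {γ : ℝ} (hγ0 : 0 ≤ γ) (hγ1 : γ < 1)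
    {T : S → A → S → ℝ} {π : S → A → ℝ} (μ0 : S → ℝ)
    (hT : IsKernel T) (hπ : IsPolicy π) (r : S → A → ℝ) :
    ret γ T π μ0 r = ∑ s0, μ0 s0 * value γ T π r s0 := by
  unfold ret
  calc (∑' t : ℕ, γ ^ t * ∑ s, ∑ a, stateDist T π μ0 t s * π s a * r s a)
      = ∑' t : ℕ, ∑ s0, μ0 s0 *
          (γ ^ t * ∑ s, ∑ a, stateDist T π (fun s => if s = s0 then 1 else 0) t s * π s a * r s a) := by
        refine tsum_congr fun t => ?_
        simp only [fun s => stateDist_linear (T := T) (π := π) μ0 t s,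
          Finset.sum_mul, Finset.mul_sum]
        conv_rhs => rw [Finset.sum_comm]
        refine Finset.sum_congr rfl fun s _ => ?_
        rw [Finset.sum_comm]
        exact Finset.sum_congr rfl fun s0 _ => Finset.sum_congr rfl fun a _ => by ring
    _ = ∑ s0, ∑' t : ℕ, μ0 s0 *
          (γ ^ t * ∑ s, ∑ a, stateDist T π (fun s => if s = s0 then 1 else 0) t s * π s a * r s a) := by
        refine Summable.tsum_finsetSum fun s0 _ => ?_
        exact (summable_ret hγ0 hγ1 hT hπ (dirac_isDist s0) r).mul_left (μ0 s0)
    _ = ∑ s0, μ0 s0 * value γ T π r s0 := by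
        refine Finset.sum_congr rfl fun s0 _ => ?_
        rw [tsum_mul_left]
        rfl

lemma stateDist_shift {T : S → A → S → ℝ} {π : S → A → ℝ} {μ0 : S → ℝ} (t : ℕ) :
    stateDist T π μ0 (t + 1) = stateDist T π (stateDist T π μ0 1) t := by
  induction t with
  | zero => rfl
  | succ t ih =>
      funext s'
      show (∑ s, ∑ a, stateDist T π μ0 (t + 1) s * π s a * T s a s') = _
      rw [ih]
      rfl

lemma bellman {γ : ℝ} (hγ0 : 0 ≤ γ) (hγ1 : γ < 1)
    {T : S → A → S → ℝ} {π : S → A → ℝ}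
    (hT : IsKernel T) (hπ : IsPolicy π) (r : S → A → ℝ) (s0 : S) :
    value γ T π r s0
      = (∑ a, π s0 a * r s0 a)
        + γ * ∑ s', (∑ a, π s0 a * T s0 a s') * value γ T π r s' := by
  set δ : S → ℝ := fun s => if s = s0 then 1 else 0 with hδ
  have hsum := summable_ret hγ0 hγ1 hT hπ (dirac_isDist s0) r (γ := γ)
  have h0 : value γ T π r s0 = ∑' t : ℕ, γ ^ t * ∑ s, ∑ a, stateDist T π δ t s * π s a * r s a := rfl
  rw [h0, Summable.tsum_eq_zero_add hsum]
  have hc0 : γ ^ 0 * (∑ s, ∑ a, stateDist T π δ 0 s * π s a * r s a)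
      = ∑ a, π s0 a * r s0 a := by
    simp only [pow_zero, one_mul, stateDist, hδ]
    rw [Finset.sum_comm]
    refine Finset.sum_congr rfl fun a _ => ?_
    simp
  rw [hc0]
  congr 1
  -- tail
  have htail : ∀ t : ℕ, γ ^ (t + 1) * ∑ s, ∑ a, stateDist T π δ (t + 1) s * π s a * r s a
      = γ * (γ ^ t * ∑ s, ∑ a, stateDist T π (stateDist T π δ 1) t s * π s a * r s a) := by
    intro t
    rw [stateDist_shift t, pow_succ]
    ring
  rw [tsum_congr htail, tsum_mul_left]
  have hret : (∑' t : ℕ, γ ^ t * ∑ s, ∑ a, stateDist T π (stateDist T π δ 1) t s * π s a * r s a)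
      = ret γ T π (stateDist T π δ 1) r := rfl
  rw [hret, ret_linear hγ0 hγ1 _ hT hπ r]
  congr 1
  refine Finset.sum_congr rfl fun s' _ => ?_
  congr 1
  show (∑ s, ∑ a, δ s * π s a * T s a s') = _
  rw [Finset.sum_comm]
  refine Finset.sum_congr rfl fun a _ => ?_
  simp [hδ]

lemma ret_eq_expOcc {γ : ℝ} (hγ0 : 0 ≤ γ) (hγ1 : γ < 1)
    {T Th : S → A → S → ℝ} {π : S → A → ℝ} {μ0 : S → ℝ}
    (hT : IsKernel T) (hTh : IsKernel Th) (hπ : IsPolicy π) (hμ : IsDist μ0)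
    (r : S → A → ℝ) :
    ret γ T π μ0 r = expOcc γ Th π μ0 (fun s a => r s a - γ * Gpi γ T Th π r s a) := by
  set V : S → ℝ := value γ T π r with hV
  set ρ : ℕ → S → ℝ := stateDist Th π μ0 with hρ
  set W : S → ℝ := fun s => ∑ s', (∑ a, π s a * Th s a s') * V s' with hW
  set c : ℕ → ℝ := fun t => ∑ s, ρ t s * V s with hc
  have hρ01 : ∀ t s, 0 ≤ ρ t s ∧ ρ t s ≤ 1 := fun t s =>
    ⟨stateDist_nonneg hTh hπ hμ.1 t s, stateDist_le_one hTh hπ hμ t s⟩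
  have hsumD : ∀ s, Summable (fun t => γ ^ t * ρ t s) := fun s =>
    summable_geom_aux hγ0 hγ1 _ 1 (fun t => by
      rw [abs_of_nonneg (hρ01 t s).1]; exact (hρ01 t s).2)
  have hcbound : ∀ t, |c t| ≤ ∑ s, |V s| := by
    intro t
    calc |c t| ≤ ∑ s, |ρ t s * V s| := Finset.abs_sum_le_sum_abs _ _
      _ ≤ ∑ s, |V s| := by
          refine Finset.sum_le_sum fun s _ => ?_
          rw [abs_mul, abs_of_nonneg (hρ01 t s).1]
          calc ρ t s * |V s| ≤ 1 * |V s| :=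
                mul_le_mul_of_nonneg_right (hρ01 t s).2 (abs_nonneg _)
            _ = |V s| := one_mul _
  have hsumc : Summable (fun t => γ ^ t * c t) :=
    summable_geom_aux hγ0 hγ1 _ _ hcbound
  have hsumc' : Summable (fun t => γ ^ t * c (t + 1)) :=
    summable_geom_aux hγ0 hγ1 _ _ (fun t => hcbound (t + 1))
  -- Step 2: per-state sum over actions
  have h2 : ∀ s, (∑ a, π s a * (r s a - γ * Gpi γ T Th π r s a)) = V s - γ * W s := by
    intro s
    have hterm : ∀ a, π s a * (r s a - γ * Gpi γ T Th π r s a)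
        = π s a * r s a + γ * (π s a * ∑ s', T s a s' * V s')
          - γ * (π s a * ∑ s', Th s a s' * V s') := by
      intro a; simp only [Gpi, hV]; ring
    rw [Finset.sum_congr rfl fun a _ => hterm a, Finset.sum_sub_distrib,
      Finset.sum_add_distrib, ← Finset.mul_sum, ← Finset.mul_sum]
    have hswap : ∀ (K : S → A → S → ℝ), (∑ a, π s a * ∑ s', K s a s' * V s')
        = ∑ s', (∑ a, π s a * K s a s') * V s' := by
      intro K
      simp only [Finset.mul_sum, Finset.sum_mul]
      rw [Finset.sum_comm]
      exact Finset.sum_congr rfl fun s' _ => Finset.sum_congr rfl fun a _ => by ring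
    rw [hswap T, hswap Th]
    have hb := bellman hγ0 hγ1 hT hπ r s
    rw [hW]
    dsimp only
    rw [← hV] at hb
    linarith [hb]
  -- Step 1: expOcc as a sum over states
  have h1 : expOcc γ Th π μ0 (fun s a => r s a - γ * Gpi γ T Th π r s a)
      = ∑ s, (∑' t : ℕ, γ ^ t * ρ t s) * (V s - γ * W s) := by
    unfold expOcc occupancy
    refine Finset.sum_congr rfl fun s _ => ?_
    rw [← h2 s, Finset.mul_sum]
    exact Finset.sum_congr rfl fun a _ => by ring
  rw [h1]
  -- Step 3 & 4
  have h3 : (∑ s, (∑' t : ℕ, γ ^ t * ρ t s) * V s) = ∑' t : ℕ, γ ^ t * c t := by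
    rw [Finset.sum_congr rfl (fun s _ => (tsum_mul_right (a := V s)
        (f := fun t => γ ^ t * ρ t s)).symm),
      ← Summable.tsum_finsetSum (f := fun s t => (γ ^ t * ρ t s) * V s)
      (fun s _ => (hsumD s).mul_right (V s))]
    refine tsum_congr fun t => ?_
    rw [hc, Finset.mul_sum]
    exact Finset.sum_congr rfl fun s _ => by ring
  have hstep : ∀ t, (∑ s, ρ t s * W s) = c (t + 1) := by
    intro t
    rw [hc]
    dsimp only
    have : ρ (t + 1) = fun s' => ∑ s, ∑ a, ρ t s * π s a * Th s a s' := rfl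
    rw [this]
    simp only [hW, Finset.mul_sum, Finset.sum_mul]
    rw [Finset.sum_comm]
    refine Finset.sum_congr rfl fun s' _ => Finset.sum_congr rfl fun s _ => ?_
    exact Finset.sum_congr rfl fun a _ => by ring
  have h4 : (∑ s, (∑' t : ℕ, γ ^ t * ρ t s) * W s) = ∑' t : ℕ, γ ^ t * c (t + 1) := by
    rw [Finset.sum_congr rfl (fun s _ => (tsum_mul_right (a := W s)
        (f := fun t => γ ^ t * ρ t s)).symm),
      ← Summable.tsum_finsetSum (f := fun s t => (γ ^ t * ρ t s) * W s)
      (fun s _ => (hsumD s).mul_right (W s))]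
    refine tsum_congr fun t => ?_
    rw [← hstep t, Finset.mul_sum]
    exact Finset.sum_congr rfl fun s _ => by ring
  have hsplit : (∑ s, (∑' t : ℕ, γ ^ t * ρ t s) * (V s - γ * W s))
      = (∑ s, (∑' t : ℕ, γ ^ t * ρ t s) * V s)
        - γ * ∑ s, (∑' t : ℕ, γ ^ t * ρ t s) * W s := by
    rw [Finset.mul_sum, ← Finset.sum_sub_distrib]
    exact Finset.sum_congr rfl fun s _ => by ring
  rw [hsplit, h3, h4]
  -- Step 5: telescoping
  have htel : (∑' t : ℕ, γ ^ t * c t) = c 0 + γ * ∑' t : ℕ, γ ^ t * c (t + 1) := by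
    rw [Summable.tsum_eq_zero_add hsumc]
    simp only [pow_zero, one_mul]
    congr 1
    rw [← tsum_mul_left]
    exact tsum_congr fun t => by rw [pow_succ]; ring
  rw [htel]
  have hret : ret γ T π μ0 r = c 0 := by
    rw [ret_linear hγ0 hγ1 μ0 hT hπ r, hc]
    rfl
  rw [hret]
  ring


/-- The uncertainty-penalized return lower-bounds the true return: η_M(π) ≥ η_M̃(π). -/
theorem penalized_return_lower_bound (γ : ℝ) (hγ0 : 0 < γ) (hγ1 : γ < 1)
    (T Th : S → A → S → ℝ) (hT : IsKernel T) (hTh : IsKernel Th)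
    (μ0 : S → ℝ) (hμ : IsDist μ0) (r : S → A → ℝ)
    (π : S → A → ℝ) (hπ : IsPolicy π)
    (u : S → A → ℝ) (hu : ∀ s a, 0 ≤ u s a) (lam : ℝ) (hlam : 0 < lam)
    (hadm : ∀ s a, γ * |Gpi γ T Th π r s a| ≤ lam * u s a) :
    ret γ T π μ0 r ≥ expOcc γ Th π μ0 (fun s a => r s a - lam * u s a) := by
  rw [ge_iff_le, ret_eq_expOcc hγ0.le hγ1 hT hTh hπ hμ r]
  unfold expOcc
  refine Finset.sum_le_sum fun s _ => Finset.sum_le_sum fun a _ => ?_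
  have hocc : 0 ≤ occupancy γ Th π μ0 s a := by
    unfold occupancy
    refine mul_nonneg (hπ.1 s a) (tsum_nonneg fun t => ?_)
    exact mul_nonneg (pow_nonneg hγ0.le t)
      (stateDist_nonneg hTh hπ hμ.1 t s)
  refine mul_le_mul_of_nonneg_left ?_ hocc
  have h1 : γ * Gpi γ T Th π r s a ≤ lam * u s a :=
    le_trans (mul_le_mul_of_nonneg_left (le_abs_self _) hγ0.le) (hadm s a)
  simp only []
  linarith

end MDP
end

section
/- For any MDP with rewards bounded by |r(s,a)| ≤ r_max and discount γ ∈ (0,1), and any two transition kernels T, T̂, the performance difference satisfies |η_{M̂}(π) − η_M(π)| ≤ (2γ·r_max/(1−γ)²) · sup_{s,a} D_TV(T̂(s,a), T(s,a)). -/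
open scoped BigOperators
open Filter Topology Classical

section MDP

variable {S A : Type*} [Fintype S] [Fintype A]

/-!
Run both chains from `μ0` and compare their state distributions in `ℓ¹`. One step of either
dynamics does not increase the `ℓ¹` distance between two distributions, and switching the
dynamics from `T` to `T̂` for one step moves a distribution by at most `‖T̂(s,a) - T(s,a)‖₁ ≤ 2ε`,
where `ε = sup D_TV`. Hence the distributions at time `t` are `2εt` apart, the expected rewards
at time `t` differ by at most `2εt·rmax`, and `∑ t γ^t·t = γ/(1-γ)²` gives the bound.
-/

lemma sum_abs_sub_le_two_mul_tvDist {P Q : S → ℝ} (h : ∑ s, P s = ∑ s, Q s) :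
    ∑ s, |P s - Q s| ≤ 2 * tvDist P Q := by
  set E := Finset.univ.filter fun s => Q s ≤ P s
  have habs : ∀ s, |P s - Q s| = 2 * (if Q s ≤ P s then P s - Q s else 0) - (P s - Q s) := by
    intro s
    split_ifs with hs
    · rw [abs_of_nonneg (sub_nonneg.2 hs)]; ring
    · rw [abs_of_neg (by linarith)]; ring
  have hE : ∑ s ∈ E, P s - ∑ s ∈ E, Q s ≤ tvDist P Q :=
    (le_abs_self _).trans <| le_ciSup (f := fun E : Finset S => |∑ s ∈ E, P s - ∑ s ∈ E, Q s|)
      (Finite.bddAbove_range _) E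
  calc ∑ s, |P s - Q s| = 2 * (∑ s ∈ E, P s - ∑ s ∈ E, Q s) := by
        simp only [habs, Finset.sum_sub_distrib, ← Finset.mul_sum, ← Finset.sum_filter, h]
        ring
    _ ≤ 2 * tvDist P Q := by linarith

lemma IsDist.sum_abs {μ : S → ℝ} (hμ : IsDist μ) : ∑ s, |μ s| = 1 := by
  simp only [abs_of_nonneg (hμ.1 _), hμ.2]

omit [Fintype A] in
lemma IsKernel.sum_abs {T : S → A → S → ℝ} (hT : IsKernel T) (s : S) (a : A) :
    ∑ s', |T s a s'| = 1 := by
  simp only [abs_of_nonneg (hT.1 _ _ _), hT.2]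

omit [Fintype S] in
lemma IsPolicy.abs_sum_mul_le {π : S → A → ℝ} (hπ : IsPolicy π) {f : A → ℝ} {c : ℝ}
    (hf : ∀ a, |f a| ≤ c) (s : S) : |∑ a, π s a * f a| ≤ c :=
  calc |∑ a, π s a * f a| ≤ ∑ a, π s a * c := by
        refine (Finset.abs_sum_le_sum_abs _ _).trans (Finset.sum_le_sum fun a _ => ?_)
        rw [abs_mul, abs_of_nonneg (hπ.1 s a)]
        exact mul_le_mul_of_nonneg_left (hf a) (hπ.1 s a)
    _ = c := by rw [← Finset.sum_mul, hπ.2, one_mul]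

def stepDist (T : S → A → S → ℝ) (π : S → A → ℝ) (μ : S → ℝ) (s' : S) : ℝ :=
  ∑ s, ∑ a, μ s * π s a * T s a s'

lemma stateDist_succ (T : S → A → S → ℝ) (π : S → A → ℝ) (μ0 : S → ℝ) (t : ℕ) :
    stateDist T π μ0 (t + 1) = stepDist T π (stateDist T π μ0 t) :=
  rfl

lemma stepDist_sub_stepDist (T Th : S → A → S → ℝ) (π : S → A → ℝ) (μ ν : S → ℝ) :
    stepDist Th π μ - stepDist T π ν = stepDist Th π (μ - ν) + stepDist (Th - T) π ν := by
  ext s'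
  simp only [stepDist, Pi.sub_apply, Pi.add_apply, ← Finset.sum_sub_distrib,
    ← Finset.sum_add_distrib]
  refine Finset.sum_congr rfl fun s _ => Finset.sum_congr rfl fun a _ => ?_
  ring

lemma sum_abs_stepDist_le {K : S → A → S → ℝ} {π : S → A → ℝ} {c : ℝ} (hπ : IsPolicy π)
    (hK : ∀ s a, ∑ s', |K s a s'| ≤ c) (μ : S → ℝ) :
    ∑ s', |stepDist K π μ s'| ≤ (∑ s, |μ s|) * c :=
  calc ∑ s', |stepDist K π μ s'| ≤ ∑ s', ∑ s, ∑ a, |μ s| * π s a * |K s a s'| := by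
        refine Finset.sum_le_sum fun s' _ => (Finset.abs_sum_le_sum_abs _ _).trans ?_
        refine Finset.sum_le_sum fun s _ => (Finset.abs_sum_le_sum_abs _ _).trans ?_
        simp only [abs_mul, abs_of_nonneg (hπ.1 s _), le_refl]
    _ = ∑ s, ∑ a, |μ s| * π s a * ∑ s', |K s a s'| := by
        simp only [Finset.mul_sum]
        rw [Finset.sum_comm]
        exact Finset.sum_congr rfl fun s _ => Finset.sum_comm
    _ ≤ ∑ s, ∑ a, |μ s| * π s a * c := by
        gcongr with s _ a _
        · exact mul_nonneg (abs_nonneg _) (hπ.1 s a)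
        · exact hK s a
    _ = (∑ s, |μ s|) * c := by
        simp only [mul_assoc, ← Finset.mul_sum, ← Finset.sum_mul, hπ.2, one_mul]

lemma isDist_stepDist {T : S → A → S → ℝ} {π : S → A → ℝ} {μ : S → ℝ} (hμ : IsDist μ)
    (hT : IsKernel T) (hπ : IsPolicy π) : IsDist (stepDist T π μ) := by
  refine ⟨fun s' => Finset.sum_nonneg fun s _ => Finset.sum_nonneg fun a _ =>
    mul_nonneg (mul_nonneg (hμ.1 s) (hπ.1 s a)) (hT.1 s a s'), ?_⟩
  unfold stepDist
  rw [Finset.sum_comm]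
  simp only [Finset.sum_comm (γ := S), ← Finset.mul_sum, hT.2, mul_one, hπ.2, hμ.2]

lemma isDist_stateDist {T : S → A → S → ℝ} {π : S → A → ℝ} {μ0 : S → ℝ} (hT : IsKernel T)
    (hπ : IsPolicy π) (hμ : IsDist μ0) (t : ℕ) : IsDist (stateDist T π μ0 t) := by
  induction t with
  | zero => exact hμ
  | succ t ih => rw [stateDist_succ]; exact isDist_stepDist ih hT hπ

lemma sum_abs_stateDist_sub_le {T Th : S → A → S → ℝ} {π : S → A → ℝ} {μ0 : S → ℝ} {c : ℝ}
    (hT : IsKernel T) (hTh : IsKernel Th) (hπ : IsPolicy π) (hμ : IsDist μ0)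
    (hc : ∀ s a, ∑ s', |Th s a s' - T s a s'| ≤ c) (t : ℕ) :
    ∑ s, |stateDist Th π μ0 t s - stateDist T π μ0 t s| ≤ t * c := by
  induction t with
  | zero => simp [stateDist]
  | succ t ih =>
    rw [stateDist_succ, stateDist_succ]
    set μ := stateDist Th π μ0 t
    set ν := stateDist T π μ0 t
    have hsplit := congrFun (stepDist_sub_stepDist T Th π μ ν)
    calc ∑ s', |stepDist Th π μ s' - stepDist T π ν s'|
        ≤ ∑ s', (|stepDist Th π (μ - ν) s'| + |stepDist (Th - T) π ν s'|) := by
          refine Finset.sum_le_sum fun s' _ => ?_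
          rw [← Pi.sub_apply (stepDist Th π μ), hsplit]
          exact abs_add_le _ _
      _ ≤ (∑ s, |μ s - ν s|) * 1 + (∑ s, |ν s|) * c := by
          rw [Finset.sum_add_distrib]
          exact add_le_add (sum_abs_stepDist_le hπ (fun s a => (hTh.sum_abs s a).le) _)
            (sum_abs_stepDist_le hπ hc ν)
      _ ≤ ((t + 1 : ℕ) : ℝ) * c := by
          rw [(isDist_stateDist hT hπ hμ t).sum_abs]
          push_cast
          linarith

def expectedReward (π : S → A → ℝ) (r : S → A → ℝ) (μ : S → ℝ) : ℝ :=
  ∑ s, ∑ a, μ s * π s a * r s a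

lemma ret_eq_tsum_expectedReward (γ : ℝ) (T : S → A → S → ℝ) (π : S → A → ℝ) (μ0 : S → ℝ)
    (r : S → A → ℝ) :
    ret γ T π μ0 r = ∑' t : ℕ, γ ^ t * expectedReward π r (stateDist T π μ0 t) :=
  rfl

lemma expectedReward_sub (π : S → A → ℝ) (r : S → A → ℝ) (μ ν : S → ℝ) :
    expectedReward π r μ - expectedReward π r ν = expectedReward π r (μ - ν) := by
  simp only [expectedReward, Pi.sub_apply, ← Finset.sum_sub_distrib, sub_mul]

lemma abs_expectedReward_le {π : S → A → ℝ} {r : S → A → ℝ} {rmax : ℝ} (hπ : IsPolicy π)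
    (hr : ∀ s a, |r s a| ≤ rmax) (μ : S → ℝ) :
    |expectedReward π r μ| ≤ (∑ s, |μ s|) * rmax :=
  calc |expectedReward π r μ| = |∑ s, μ s * ∑ a, π s a * r s a| := by
        simp only [expectedReward, Finset.mul_sum, mul_assoc]
    _ ≤ ∑ s, |μ s| * rmax := by
        refine (Finset.abs_sum_le_sum_abs _ _).trans (Finset.sum_le_sum fun s _ => ?_)
        rw [abs_mul]
        exact mul_le_mul_of_nonneg_left (hπ.abs_sum_mul_le (hr s) s) (abs_nonneg _)
    _ = (∑ s, |μ s|) * rmax := Finset.sum_mul _ _ _ |>.symm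

lemma summable_pow_mul_of_abs_le {γ C : ℝ} (hγ0 : 0 ≤ γ) (hγ1 : γ < 1) {f : ℕ → ℝ}
    (hf : ∀ t, |f t| ≤ C) : Summable fun t => γ ^ t * f t := by
  refine Summable.of_norm_bounded ((summable_geometric_of_lt_one hγ0 hγ1).mul_right C) fun t => ?_
  rw [Real.norm_eq_abs, abs_mul, abs_of_nonneg (pow_nonneg hγ0 t)]
  exact mul_le_mul_of_nonneg_left (hf t) (pow_nonneg hγ0 t)

lemma abs_tsum_pow_mul_le_of_abs_le_mul {γ C : ℝ} (hγ0 : 0 ≤ γ) (hγ1 : γ < 1) {f : ℕ → ℝ}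
    (hf : ∀ t, |f t| ≤ C * t) : |∑' t, γ ^ t * f t| ≤ C * (γ / (1 - γ) ^ 2) := by
  have hγ : ‖γ‖ < 1 := by rwa [Real.norm_of_nonneg hγ0]
  refine tsum_of_norm_bounded (f := fun t => γ ^ t * f t)
    ((hasSum_coe_mul_geometric_of_norm_lt_one hγ).mul_left C) fun t => ?_
  rw [Real.norm_eq_abs, abs_mul, abs_of_nonneg (pow_nonneg hγ0 t)]
  calc γ ^ t * |f t| ≤ γ ^ t * (C * t) := mul_le_mul_of_nonneg_left (hf t) (pow_nonneg hγ0 t)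
    _ = C * (t * γ ^ t) := by ring

/-- Simulation-style bound: |η_M̂(π) − η_M(π)| ≤ (2γ r_max/(1−γ)²)·sup_{s,a} D_TV. -/
theorem return_gap_tv_bound (γ : ℝ) (hγ0 : 0 < γ) (hγ1 : γ < 1)
    (T Th : S → A → S → ℝ) (hT : IsKernel T) (hTh : IsKernel Th)
    (μ0 : S → ℝ) (hμ : IsDist μ0) (r : S → A → ℝ)
    (rmax : ℝ) (hr : ∀ s a, |r s a| ≤ rmax)
    (π : S → A → ℝ) (hπ : IsPolicy π) :
    |ret γ Th π μ0 r - ret γ T π μ0 r|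
      ≤ (2 * γ * rmax / (1 - γ) ^ 2) * ⨆ sa : S × A, tvDist (Th sa.1 sa.2) (T sa.1 sa.2) := by
  -- without states both returns vanish, whereas `rmax` may be negative
  rcases isEmpty_or_nonempty S with hS | ⟨⟨s₀⟩⟩
  · simp [ret]
  set ε := ⨆ sa : S × A, tvDist (Th sa.1 sa.2) (T sa.1 sa.2)
  have hsup : ∀ s a, tvDist (Th s a) (T s a) ≤ ε := fun s a =>
    le_ciSup (f := fun sa : S × A => tvDist (Th sa.1 sa.2) (T sa.1 sa.2))
      (Finite.bddAbove_range _) (s, a)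
  have hε : ∀ s a, ∑ s', |Th s a s' - T s a s'| ≤ 2 * ε := fun s a =>
    (sum_abs_sub_le_two_mul_tvDist (by rw [hTh.2, hT.2])).trans (by linarith [hsup s a])
  have hrmax : 0 ≤ rmax := (abs_nonneg _).trans (hπ.abs_sum_mul_le (hr s₀) s₀)
  have hbounded : ∀ K, IsKernel K → ∀ t, |expectedReward π r (stateDist K π μ0 t)| ≤ rmax :=
    fun K hK t => (abs_expectedReward_le hπ hr _).trans_eq
      (by rw [(isDist_stateDist hK hπ hμ t).sum_abs, one_mul])
  have hgap : ∀ t : ℕ, |expectedReward π r (stateDist Th π μ0 t)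
      - expectedReward π r (stateDist T π μ0 t)| ≤ 2 * ε * rmax * t := fun t =>
    calc _ ≤ (∑ s, |stateDist Th π μ0 t s - stateDist T π μ0 t s|) * rmax := by
          rw [expectedReward_sub]; exact abs_expectedReward_le hπ hr _
      _ ≤ (t * (2 * ε)) * rmax :=
          mul_le_mul_of_nonneg_right (sum_abs_stateDist_sub_le hT hTh hπ hμ hε t) hrmax
      _ = 2 * ε * rmax * t := by ring
  rw [ret_eq_tsum_expectedReward, ret_eq_tsum_expectedReward, ← Summable.tsum_sub
    (summable_pow_mul_of_abs_le hγ0.le hγ1 (hbounded Th hTh))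
    (summable_pow_mul_of_abs_le hγ0.le hγ1 (hbounded T hT))]
  simp only [← mul_sub]
  calc _ ≤ 2 * ε * rmax * (γ / (1 - γ) ^ 2) :=
        abs_tsum_pow_mul_le_of_abs_le_mul hγ0.le hγ1 hgap
    _ = 2 * γ * rmax / (1 - γ) ^ 2 * ε := by ring

end MDP
end
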